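/- In the coset-coding wiretap setting with a memoryless binary-input eavesdropper channel, the probability generating function of the conditional distribution of S^m given Z^n = z^n factorizes as G_{S^m|Z^n=z^n}(t) = Π_{i=1}^n (Φ(0|z_i) + Φ(1|z_i)·t^{a_i}), where a_i is the i-th column of A and Φ is the backward channel probability. -/

import Mathlib

open Finset

/-- Probability generating function of a distribution on `F_2^m`. -/
noncomputable def pgf {m : ℕ} (p : (Fin m → ZMod 2) → ℝ) :
    AddMonoidAlgebra ℝ (Fin m → ZMod 2) :=
  ∑ x : Fin m → ZMod 2, AddMonoidAlgebra.single x (p x)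

/-- Coset-coding codeword `X^n = (S^m ⊕ A_2·U^{n-m}, U^{n-m})`. -/
def codeword {m k : ℕ} (A2 : Matrix (Fin m) (Fin k) (ZMod 2))
    (s : Fin m → ZMod 2) (u : Fin k → ZMod 2) : (Fin m ⊕ Fin k) → ZMod 2 :=
  Sum.elim (fun j => s j + A2.mulVec u j) u

/-- The parity check matrix `A = [I_m | A_2]`. -/
def pcheck {m k : ℕ} (A2 : Matrix (Fin m) (Fin k) (ZMod 2)) :
    Matrix (Fin m) (Fin m ⊕ Fin k) (ZMod 2) :=
  Matrix.of fun j => Sum.elim (fun j' => if j = j' then 1 else 0) (fun i => A2 j i)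

/-- Joint pmf of `S^m` and Eve's observation `Z^n` through a memoryless channel `W`. -/
noncomputable def pSZdmc {m k : ℕ} {𝓩 : Type*} [Fintype 𝓩]
    (W : 𝓩 → ZMod 2 → ℝ) (A2 : Matrix (Fin m) (Fin k) (ZMod 2))
    (s : Fin m → ZMod 2) (z : (Fin m ⊕ Fin k) → 𝓩) : ℝ :=
  ∑ x : (Fin m ⊕ Fin k) → ZMod 2,
    (1 / 2 ^ (m + k) : ℝ) * (if (pcheck A2).mulVec x = s then 1 else 0) *
      ∏ i, W (z i) (x i)

/-- Backward channel probability `Φ(x|z) = W_E(z|x) / (W_E(z|0) + W_E(z|1))`. -/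
noncomputable def backward {𝓩 : Type*} (W : 𝓩 → ZMod 2 → ℝ) (x : ZMod 2) (z : 𝓩) : ℝ :=
  W z x / (W z 0 + W z 1)

/-!
Expanding the product gives `∑ₓ t^{A x} ∏ᵢ Φ(xᵢ|zᵢ)`. The normalizer `∑ₛ P(s, z)` is
`2⁻ⁿ ∏ᵢ (W(zᵢ|0) + W(zᵢ|1))`, so dividing the likelihood `∏ᵢ W(zᵢ|xᵢ)` by it gives exactly
`∏ᵢ Φ(xᵢ|zᵢ)`; grouping the inputs `x` by their syndrome `A x = s` then yields the
generating function of `S^m` given `z`.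
-/

namespace AddMonoidAlgebra

theorem sum_single_sum_ite_eq {k G X : Type*} [Semiring k] [Fintype G] [DecidableEq G]
    [Fintype X] (φ : X → G) (g : X → k) :
    ∑ s, single s (∑ x, if φ x = s then g x else 0) = ∑ x, single (φ x) (g x) := by
  simp only [← singleAddHom_apply, map_sum, apply_ite, map_zero]
  rw [Finset.sum_comm]
  simp

theorem prod_sum_single_smul_col {R k ι n : Type*} [CommSemiring R] [Fintype R] [CommSemiring k]
    [Fintype ι] [DecidableEq ι] (A : Matrix n ι R) (f : ι → R → k) :
    ∏ i, ∑ c, single (c • fun j => A j i) (f i c) =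
      ∑ x : ι → R, single (A.mulVec x) (∏ i, f i (x i)) := by
  rw [Fintype.prod_sum]
  refine Finset.sum_congr rfl fun x _ => ?_
  simp only [prod_single, Matrix.mulVec_eq_sum, op_smul_eq_smul]
  rfl

end AddMonoidAlgebra

theorem sum_zmod_two {M : Type*} [AddCommMonoid M] (f : ZMod 2 → M) :
    ∑ c, f c = f 0 + f 1 :=
  Fin.sum_univ_two f

section Eavesdropper

variable {m k : ℕ} {𝓩 : Type*} [Fintype 𝓩] (W : 𝓩 → ZMod 2 → ℝ)
  (A2 : Matrix (Fin m) (Fin k) (ZMod 2)) (z : Fin m ⊕ Fin k → 𝓩)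

theorem pSZdmc_eq_mul_sum_fiber (s : Fin m → ZMod 2) :
    pSZdmc W A2 s z = 1 / 2 ^ (m + k) *
      ∑ x, if (pcheck A2).mulVec x = s then ∏ i, W (z i) (x i) else 0 := by
  simp only [pSZdmc, mul_sum, mul_ite, mul_one, mul_zero, ite_mul, zero_mul]

theorem sum_pSZdmc :
    ∑ s, pSZdmc W A2 s z = 1 / 2 ^ (m + k) * ∏ i, (W (z i) 0 + W (z i) 1) := by
  simp only [pSZdmc_eq_mul_sum_fiber, ← mul_sum]
  rw [sum_comm]
  simp only [sum_ite_eq, mem_univ, if_true, ← sum_zmod_two, Fintype.prod_sum]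

theorem pSZdmc_div_sum (s : Fin m → ZMod 2) :
    pSZdmc W A2 s z / ∑ s', pSZdmc W A2 s' z =
      ∑ x, if (pcheck A2).mulVec x = s then ∏ i, backward W (x i) (z i) else 0 := by
  rw [sum_pSZdmc, pSZdmc_eq_mul_sum_fiber, mul_div_mul_left _ _ (by positivity), sum_div]
  simp only [backward, prod_div_distrib, ite_div, zero_div]

end Eavesdropper

theorem stmt8_general {m k : ℕ} {𝓩 : Type*} [Fintype 𝓩]
    (W : 𝓩 → ZMod 2 → ℝ)
    (A2 : Matrix (Fin m) (Fin k) (ZMod 2)) :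
    ∀ z : (Fin m ⊕ Fin k) → 𝓩,
      pgf (fun s => pSZdmc W A2 s z / (∑ s', pSZdmc W A2 s' z))
        = ∏ i : Fin m ⊕ Fin k,
            (AddMonoidAlgebra.single (0 : Fin m → ZMod 2) (backward W 0 (z i)) +
              AddMonoidAlgebra.single (fun j => pcheck A2 j i) (backward W 1 (z i))) := by
  intro z
  rw [pgf]
  simp only [pSZdmc_div_sum, AddMonoidAlgebra.sum_single_sum_ite_eq]
  rw [← AddMonoidAlgebra.prod_sum_single_smul_col (pcheck A2) fun i c => backward W c (z i)]
  simp only [sum_zmod_two, zero_smul, one_smul]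

/-- The probability generating function of the conditional distribution of `S^m` given
`Z^n = z^n` factorizes as `∏_{i=1}^n (Φ(0|z_i) + Φ(1|z_i) t^{a_i})`, where `a_i` is the
`i`-th column of `A = [I_m | A_2]`. -/
theorem stmt8 {m k : ℕ} {𝓩 : Type*} [Fintype 𝓩]
    (W : 𝓩 → ZMod 2 → ℝ) (hW : ∀ z x, 0 ≤ W z x) (hpos : ∀ z, 0 < W z 0 + W z 1)
    (A2 : Matrix (Fin m) (Fin k) (ZMod 2)) :
    ∀ z : (Fin m ⊕ Fin k) → 𝓩,
      pgf (fun s => pSZdmc W A2 s z / (∑ s', pSZdmc W A2 s' z))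
        = ∏ i : Fin m ⊕ Fin k,
            (AddMonoidAlgebra.single (0 : Fin m → ZMod 2) (backward W 0 (z i)) +
              AddMonoidAlgebra.single (fun j => pcheck A2 j i) (backward W 1 (z i))) :=
  stmt8_general W A2
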